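/- arXiv:1602.01777 — 2 statements merged into one kernel-verified Lean document; each statement's English description precedes it below -/
import Mathlib

section
/- Consider a planar straight-line graph in which the vertex set is 2-colored (reachable/unreachable) and each face of the union of the reachable subgraph and the unreachable subgraph whose boundary contains vertices of both colors is called a border region. Then any closed curve separating the reachable subgraph from the unreachable subgraph has at least one connected component inside each border region; hence the number of border regions is a lower bound on the number of connected components (holes plus outer boundary) of any range polygon. -/
open Set

noncomputable section

abbrev Pt : Type := EuclideanSpace ℝ (Fin 2)

/-- The interior region of a (family of) closed curve(s) `C`: points off `C` whose
complementary component is bounded. -/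
def curveInterior (C : Set Pt) : Set Pt :=
  {p : Pt | p ∉ C ∧ Bornology.IsBounded (connectedComponentIn Cᶜ p)}

/-- The exterior region of `C`. -/
def curveExterior (C : Set Pt) : Set Pt :=
  {p : Pt | p ∉ C ∧ ¬ Bornology.IsBounded (connectedComponentIn Cᶜ p)}

/-- A border region of the plane graph `G' = Gr ∪ Gu`: a face (connected component of
the complement) whose closure meets both the reachable part `Gr` and the unreachable
part `Gu`. -/
def IsBorderRegion (Gr Gu F : Set Pt) : Prop :=
  (∃ p, p ∉ Gr ∪ Gu ∧ F = connectedComponentIn (Gr ∪ Gu)ᶜ p) ∧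
  (closure F ∩ Gr).Nonempty ∧ (closure F ∩ Gu).Nonempty

/-- If a connected set `F` misses `C`, any point of `closure F` that is off `C` lies in
the same component of `Cᶜ` as the points of `F`. -/
lemma comp_eq_of_mem_closure {C F : Set Pt} (hF : IsConnected F) (hFC : F ⊆ Cᶜ)
    {a : Pt} (ha : a ∈ closure F) (haC : a ∉ C) {q : Pt} (hq : q ∈ F) :
    connectedComponentIn Cᶜ a = connectedComponentIn Cᶜ q := by
  have hconn : IsPreconnected (insert a F) :=
    hF.isPreconnected.subset_closure (subset_insert a F)
      (insert_subset ha subset_closure)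
  have hsub : insert a F ⊆ Cᶜ := insert_subset haC hFC
  have h1 : insert a F ⊆ connectedComponentIn Cᶜ a :=
    hconn.subset_connectedComponentIn (mem_insert a F) hsub
  exact connectedComponentIn_eq (h1 (mem_insert_of_mem a hq))

/-- let `C` be a range polygon, i.e. a separating curve family whose
interior region contains the (nonempty) reachable subgraph `Gr` and excludes the
(nonempty) unreachable subgraph `Gu`.  Then `C` meets every border region, and each
border region contains at least one connected component of `C`; in particular the border
regions inject into the connected components of `C`, so the number of border regions is
a lower bound on the number of connected components of any range polygon. -/
theorem stmt_15 (Gr Gu : Set Pt) (hGr : Gr.Nonempty) (hGu : Gu.Nonempty)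
    (hdisj : Disjoint Gr Gu)
    (C : Set Pt)
    (hCr : Disjoint C Gr) (hCu : Disjoint C Gu)
    (hin : Gr ⊆ curveInterior C)
    (hout : Gu ⊆ curveExterior C) :
    (∀ F : Set Pt, IsBorderRegion Gr Gu F → (C ∩ F).Nonempty) ∧
    ∃ f : {F : Set Pt // IsBorderRegion Gr Gu F} →
        {D : Set Pt // ∃ p ∈ C, D = connectedComponentIn C p},
      Function.Injective f ∧ ∀ F, (f F : Set Pt) ⊆ (F : Set Pt) := by
  have hCsub : C ⊆ (Gr ∪ Gu)ᶜ := by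
    intro x hx hx'
    rcases hx' with h | h
    · exact Set.disjoint_left.mp hCr hx h
    · exact Set.disjoint_left.mp hCu hx h
  have key : ∀ F : Set Pt, IsBorderRegion Gr Gu F → (C ∩ F).Nonempty := by
    intro F hF
    obtain ⟨⟨p, hp, rfl⟩, ⟨a, haF, haGr⟩, ⟨b, hbF, hbGu⟩⟩ := hF
    by_contra h
    have hFC : connectedComponentIn (Gr ∪ Gu)ᶜ p ⊆ Cᶜ := by
      intro x hx hxC
      exact h ⟨x, hxC, hx⟩
    have hpmem : p ∈ (Gr ∪ Gu)ᶜ := hp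
    have hFconn : IsConnected (connectedComponentIn (Gr ∪ Gu)ᶜ p) :=
      (isConnected_connectedComponentIn_iff).mpr hpmem
    have hpF : p ∈ connectedComponentIn (Gr ∪ Gu)ᶜ p :=
      mem_connectedComponentIn hpmem
    have haC : a ∉ C := Set.disjoint_right.mp hCr haGr
    have hbC : b ∉ C := Set.disjoint_right.mp hCu hbGu
    have ha := comp_eq_of_mem_closure hFconn hFC haF haC hpF
    have hb := comp_eq_of_mem_closure hFconn hFC hbF hbC hpF
    have hbound : Bornology.IsBounded (connectedComponentIn Cᶜ a) := (hin haGr).2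
    have hunbound : ¬ Bornology.IsBounded (connectedComponentIn Cᶜ b) := (hout hbGu).2
    rw [ha] at hbound
    rw [hb] at hunbound
    exact hunbound hbound
  refine ⟨key, ?_⟩
  choose c hc using fun F : {F : Set Pt // IsBorderRegion Gr Gu F} => key F.1 F.2
  refine ⟨fun F => ⟨connectedComponentIn C (c F), c F, (hc F).1, rfl⟩, ?_, ?_⟩
  · -- injectivity
    intro F1 F2 heq
    have hsets : connectedComponentIn C (c F1) = connectedComponentIn C (c F2) :=
      congrArg Subtype.val heq
    obtain ⟨⟨p1, hp1, hF1⟩, -, -⟩ := F1.2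
    obtain ⟨⟨p2, hp2, hF2⟩, -, -⟩ := F2.2
    have hc1 : c F1 ∈ connectedComponentIn C (c F2) := by
      rw [← hsets]; exact mem_connectedComponentIn (hc F1).1
    have hc1C2 : connectedComponentIn C (c F2) ⊆ C := connectedComponentIn_subset C _
    -- c F1 and c F2 lie in same component of C, both inside (Gr∪Gu)ᶜ,
    -- and the component is connected, so the faces coincide.
    have hconn : IsPreconnected (connectedComponentIn C (c F2)) :=
      isPreconnected_connectedComponentIn
    have hsub : connectedComponentIn C (c F2) ⊆ (Gr ∪ Gu)ᶜ := hc1C2.trans hCsub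
    have h2 : connectedComponentIn C (c F2) ⊆ connectedComponentIn (Gr ∪ Gu)ᶜ (c F2) :=
      hconn.subset_connectedComponentIn (mem_connectedComponentIn (hc F2).1) hsub
    have hc1in : c F1 ∈ connectedComponentIn (Gr ∪ Gu)ᶜ (c F2) := h2 hc1
    have e1 : connectedComponentIn (Gr ∪ Gu)ᶜ (c F1) = F1.1 := by
      rw [hF1]; exact (connectedComponentIn_eq (show c F1 ∈ _ from hF1 ▸ (hc F1).2)).symm
    have e2 : connectedComponentIn (Gr ∪ Gu)ᶜ (c F2) = F2.1 := by
      rw [hF2]; exact (connectedComponentIn_eq (show c F2 ∈ _ from hF2 ▸ (hc F2).2)).symm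
    have : F1.1 = F2.1 := by
      rw [← e1, ← e2]
      exact (connectedComponentIn_eq hc1in).symm
    exact Subtype.ext this
  · -- f F ⊆ F
    intro F
    obtain ⟨⟨p, hp, hFeq⟩, -, -⟩ := F.2
    have hconn : IsPreconnected (connectedComponentIn C (c F)) :=
      isPreconnected_connectedComponentIn
    have hsub : connectedComponentIn C (c F) ⊆ (Gr ∪ Gu)ᶜ :=
      (connectedComponentIn_subset C _).trans hCsub
    have h2 : connectedComponentIn C (c F) ⊆ connectedComponentIn (Gr ∪ Gu)ᶜ (c F) :=
      hconn.subset_connectedComponentIn (mem_connectedComponentIn (hc F).1) hsub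
    have e : connectedComponentIn (Gr ∪ Gu)ᶜ (c F) = F.1 := by
      rw [hFeq]; exact (connectedComponentIn_eq (show c F ∈ _ from hFeq ▸ (hc F).2)).symm
    exact e ▸ h2
end
end

section
/- Algorithm correctness of the resource-bounded Dijkstra stopping criterion: consider a directed graph with nonnegative lengths and arbitrary (possibly negative, but battery-constrained so that resource consumption along any prefix of a passable path stays within [0, r]) consumptions, and run Dijkstra's algorithm by length from source s, where a vertex v is reachable iff the consumption of the shortest s–v path is at most r. If at some point no reachable vertex remains in the priority queue, then every vertex not yet settled as reachable is unreachable; i.e., every reachable vertex becomes settled while at least one reachable vertex is in the queue, because along a shortest path from s to a reachable vertex all intermediate vertices are reachable. -/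
open Set

/-- correctness of the stopping criterion of the resource-bounded Dijkstra
search: let `E` be the edge relation of a directed graph, `s` the source, `reachable`
the set of vertices whose shortest path has resource consumption at most the range
(battery constraints ensure that every prefix of the shortest path to a reachable vertex
ends at a reachable vertex, so every reachable vertex is joined to `s` by a path of
reachable vertices).  Let `S` be the set of settled vertices, containing `s`.  If no
reachable vertex remains in the priority queue — that is, every unsettled vertex adjacent
to a settled one is unreachable — then every vertex not settled is unreachable, i.e.
every reachable vertex is already settled. -/
theorem stmt_18 {V : Type*} (E : V → V → Prop) (s : V)
    (reachable : V → Prop) (hs : reachable s)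
    (S : Set V) (hsS : s ∈ S)
    -- along the shortest path from s to a reachable vertex all vertices are reachable
    (hpath : ∀ v, reachable v → ∃ l : List V, l.head? = some s ∧ l.getLast? = some v ∧
      l.Chain' E ∧ ∀ x ∈ l, reachable x)
    -- no reachable vertex is left in the queue
    (hqueue : ∀ v, v ∉ S → (∃ u ∈ S, E u v) → ¬ reachable v) :
    ∀ v, reachable v → v ∈ S := by
  -- key lemma: along a chain of reachable vertices whose head is settled,
  -- every vertex is settled
  have key : ∀ l : List V, l.Chain' E → (∀ x ∈ l, reachable x) →
      ∀ a, l.head? = some a → a ∈ S → ∀ x ∈ l, x ∈ S := by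
    intro l
    induction l with
    | nil => intro _ _ a ha; simp at ha
    | cons a t ih =>
      intro hchain hreach b hb hbS x hx
      simp at hb; subst hb
      rcases List.mem_cons.mp hx with hx | hx
      · subst hx; exact hbS
      · cases t with
        | nil => simp at hx
        | cons c t' =>
          have hEc : E a c := (List.isChain_cons_cons.mp hchain).1
          have hcS : c ∈ S := by
            by_contra hcs
            exact hqueue c hcs ⟨a, hbS, hEc⟩ (hreach c (by simp))
          exact ih (List.isChain_cons_cons.mp hchain).2
            (fun y hy => hreach y (List.mem_cons_of_mem _ hy)) c rfl hcS x hx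
  intro v hv
  obtain ⟨l, hhead, hlast, hchain, hreach⟩ := hpath v hv
  have hvS : v ∈ l := by
    obtain ⟨h, hv'⟩ := List.mem_getLast?_eq_getLast (x := v) hlast
    exact hv' ▸ List.getLast_mem h
  exact key l hchain hreach s hhead hsS v hvS
end
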